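/- The Dirichlet series Z(s) := Σ_{n ≥ 1} n^{−s} ∏_{p | n} (1 + 1/p)^{−1} satisfies Z(s) = ζ(s)·∏_p (1 − 1/(p^s(p+1))) for Re(s) > 1, where the product converges absolutely for Re(s) > 0. In particular, Z(s)·ζ(s+1)/ζ(s) extends to an analytic nonvanishing function on Re(s) > 0. -/

import Mathlib

open Complex

namespace ZSR

/-- Local norm bound on `1/(p^s (p+1))`. -/
lemma g_norm_le {s : ℂ} (hs : 0 < s.re) (p : Nat.Primes) :
    ‖(1 : ℂ) / (((p : ℕ) : ℂ) ^ s * ((p : ℕ) + 1))‖ ≤ ((p : ℕ) : ℝ) ^ (-(s.re + 1)) := by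
  obtain ⟨p, hp⟩ := p
  have hp0 : (0 : ℝ) < (p : ℝ) := by exact_mod_cast hp.pos
  have h1 : ‖((p : ℕ) : ℂ) ^ s‖ = (p : ℝ) ^ s.re := norm_natCast_cpow_of_pos hp.pos s
  have h2 : ‖((p : ℕ) : ℂ) + 1‖ = (p : ℝ) + 1 := by
    rw [show ((p : ℕ) : ℂ) + 1 = (((p + 1 : ℕ) : ℝ) : ℂ) by push_cast; ring, norm_real,
      Real.norm_of_nonneg (by positivity)]
    push_cast; ring
  rw [norm_div, norm_one, norm_mul, h1, h2, Real.rpow_neg (le_of_lt hp0), Real.rpow_add hp0,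
    Real.rpow_one, one_div]
  refine inv_anti₀ (by positivity) ?_
  have := Real.rpow_pos_of_pos hp0 s.re
  nlinarith

lemma g_norm_lt_one {s : ℂ} (hs : 0 < s.re) (p : Nat.Primes) :
    ‖(1 : ℂ) / (((p : ℕ) : ℂ) ^ s * ((p : ℕ) + 1))‖ < 1 := by
  refine (g_norm_le hs p).trans_lt ?_
  refine Real.rpow_lt_one_of_one_lt_of_neg ?_ (by linarith)
  exact_mod_cast p.prop.one_lt

/-- Part 2: summability. -/
lemma summable_g {s : ℂ} (hs : 0 < s.re) :
    Summable fun p : Nat.Primes => ‖(1 : ℂ) / (((p : ℕ) : ℂ) ^ s * ((p : ℕ) + 1))‖ :=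
  (Nat.Primes.summable_rpow.mpr (by linarith : -(s.re + 1) < -1)).of_nonneg_of_le
    (fun _ => norm_nonneg _) (g_norm_le hs)

/-- The product `∏ (1 - 1/(p^s(p+1)))` has a nonzero value, expressed via `exp`. -/
lemma hasProd_g {s : ℂ} (hs : 0 < s.re) :
    HasProd (fun p : Nat.Primes => 1 - 1 / (((p : ℕ) : ℂ) ^ s * ((p : ℕ) + 1)))
      (Complex.exp (∑' p : Nat.Primes,
        Complex.log (1 - 1 / (((p : ℕ) : ℂ) ^ s * ((p : ℕ) + 1))))) := by
  have hgsum : Summable fun p : Nat.Primes => (1 : ℂ) / (((p : ℕ) : ℂ) ^ s * ((p : ℕ) + 1)) :=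
    (summable_g hs).of_norm
  have hlog := hgsum.clog_one_sub
  have H := hlog.hasSum.cexp
  refine H.congr_fun fun p => ?_
  have : 1 - (1 : ℂ) / (((p : ℕ) : ℂ) ^ s * ((p : ℕ) + 1)) ≠ 0 := by
    intro h
    have := g_norm_lt_one hs p
    rw [sub_eq_zero] at h
    rw [← h] at this
    simp at this
  exact (Complex.exp_log this).symm

end ZSR

open Complex

namespace ZSR2

lemma hasProd_aux (u : ℕ → ℂ) (hu : ∀ p : ℕ, p.Prime → ‖u p‖ ≤ 1) {z : ℂ} (hz : 1 < z.re) :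
    HasProd
      (fun p : Nat.Primes =>
        (1 - ((p : ℕ) : ℂ) ^ (-z))⁻¹ * (1 - (1 - u p) * ((p : ℕ) : ℂ) ^ (-z)))
      (∑' n : ℕ, if n = 0 then 0 else (n : ℂ) ^ (-z) * ∏ p ∈ n.primeFactors, u p) := by
  have hz0 : z ≠ 0 := by
    intro h; rw [h] at hz; simp at hz; linarith
  set f : ℕ → ℂ := fun n => if n = 0 then 0 else (n : ℂ) ^ (-z) * ∏ p ∈ n.primeFactors, u p
    with hf
  have hf₁ : f 1 = 1 := by simp [hf]
  have hmul : ∀ {m n : ℕ}, Nat.Coprime m n → f (m * n) = f m * f n := by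
    intro m n hmn
    rcases eq_or_ne m 0 with rfl | hm
    · rw [Nat.coprime_zero_left] at hmn
      subst hmn; simp [hf]
    rcases eq_or_ne n 0 with rfl | hn
    · rw [Nat.coprime_zero_right] at hmn
      subst hmn; simp [hf]
    simp only [hf, if_neg hm, if_neg hn, if_neg (mul_ne_zero hm hn)]
    rw [Nat.primeFactors_mul hm hn, Finset.prod_union hmn.disjoint_primeFactors, Nat.cast_mul,
      show ((m : ℂ) * n) ^ (-z) = (m : ℂ) ^ (-z) * (n : ℂ) ^ (-z) by
        simpa only [ofReal_natCast] using
          mul_cpow_ofReal_nonneg m.cast_nonneg n.cast_nonneg (-z)]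
    ring
  have hnorm : ∀ n : ℕ, ‖f n‖ ≤ (n : ℝ) ^ (-z.re) := by
    intro n
    rcases eq_or_ne n 0 with rfl | hn
    · simp [hf, Real.zero_rpow (by intro h; rw [neg_eq_zero] at h; rw [h] at hz; linarith :
        -z.re ≠ 0)]
    · rw [hf]
      simp only [if_neg hn]
      rw [norm_mul, norm_natCast_cpow_of_pos (Nat.pos_of_ne_zero hn)]
      have h2 : ‖∏ p ∈ n.primeFactors, u p‖ ≤ 1 := by
        rw [norm_prod]
        exact Finset.prod_le_one (fun p _ => norm_nonneg _)
          (fun p hp => hu p (Nat.prime_of_mem_primeFactors hp))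
      have h3 : (0 : ℝ) ≤ (n : ℝ) ^ (-z).re := Real.rpow_nonneg n.cast_nonneg _
      calc (n : ℝ) ^ (-z).re * ‖∏ p ∈ n.primeFactors, u p‖ ≤ (n : ℝ) ^ (-z).re * 1 :=
            mul_le_mul_of_nonneg_left h2 h3
        _ = (n : ℝ) ^ (-z.re) := by rw [mul_one, neg_re]
  have hsum : Summable (fun n => ‖f n‖) :=
    (Real.summable_nat_rpow.mpr (by linarith : -z.re < -1)).of_nonneg_of_le
      (fun n => norm_nonneg _) hnorm
  have key := EulerProduct.eulerProduct_hasProd hf₁ hmul hsum (by simp [hf])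
  refine key.congr_fun fun p => ?_
  -- local factor computation
  obtain ⟨p, hp⟩ := p
  simp only
  set x : ℂ := (p : ℂ) ^ (-z) with hxdef
  have hxe : ∀ e : ℕ, ((p ^ e : ℕ) : ℂ) ^ (-z) = x ^ e := fun e =>
    map_pow (riemannZetaSummandHom hz0) p e
  have hx1 : ‖x‖ < 1 := by
    rw [hxdef, norm_natCast_cpow_of_pos hp.pos]
    exact Real.rpow_lt_one_of_one_lt_of_neg (by exact_mod_cast hp.one_lt)
      (by simp only [neg_re]; linarith)
  have hx0 : (1 : ℂ) - x ≠ 0 := by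
    intro h
    rw [sub_eq_zero] at h
    rw [← h] at hx1
    simp at hx1
  have hsump : Summable fun e : ℕ => f (p ^ e) :=
    hsum.of_norm.comp_injective (Nat.pow_right_injective hp.two_le)
  have hterm : ∀ e : ℕ, f (p ^ (e + 1)) = u p * x ^ (e + 1) := by
    intro e
    rw [hf]
    simp only [if_neg (pow_ne_zero _ hp.pos.ne')]
    rw [Nat.primeFactors_prime_pow (Nat.succ_ne_zero e) hp, Finset.prod_singleton, hxe]
    ring
  calc (1 - (p : ℂ) ^ (-z))⁻¹ * (1 - (1 - u p) * (p : ℂ) ^ (-z))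
      = (1 - x)⁻¹ * (1 - (1 - u p) * x) := rfl
    _ = 1 + u p * ((1 - x)⁻¹ * x) := by field_simp; ring
    _ = f (p ^ 0) + ∑' e : ℕ, f (p ^ (e + 1)) := by
        rw [show f (p ^ 0) = 1 by rw [pow_zero]; exact hf₁]
        congr 1
        have : ∑' e : ℕ, f (p ^ (e + 1)) = ∑' e : ℕ, u p * x * x ^ e := by
          refine tsum_congr fun e => ?_
          rw [hterm e, pow_succ]; ring
        rw [this, tsum_mul_left, tsum_geometric_of_norm_lt_one hx1]
        ring
    _ = ∑' e : ℕ, f (p ^ e) := (Summable.tsum_eq_zero_add hsump).symm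

end ZSR2

namespace ZSR3
open ZSR ZSR2

noncomputable def a : ℕ → ℂ :=
  fun n => if n = 0 then 0 else (∏ p ∈ n.primeFactors, ((p : ℂ) + 1)⁻¹) / n

lemma natCast_add_one_ne_zero (p : ℕ) : ((p : ℂ) + 1) ≠ 0 := by
  intro h
  have := congrArg Complex.re h
  simp only [Complex.add_re, Complex.natCast_re, Complex.one_re, Complex.zero_re] at this
  have h2 : (0 : ℝ) ≤ (p : ℝ) := Nat.cast_nonneg _
  linarith

lemma norm_inv_add_one_le (p : ℕ) : ‖((p : ℂ) + 1)⁻¹‖ ≤ 1 := by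
  rw [show (p : ℂ) + 1 = (((p : ℝ) + 1 : ℝ) : ℂ) by push_cast; ring, ← Complex.ofReal_inv,
    Complex.norm_real, Real.norm_of_nonneg (by positivity)]
  rw [inv_le_one_iff₀]
  right
  have : (0 : ℝ) ≤ (p : ℝ) := Nat.cast_nonneg _
  linarith

lemma abscissa_le : LSeries.abscissaOfAbsConv a ≤ 0 := by
  have h := LSeries.abscissaOfAbsConv_le_of_le_const_mul_rpow (f := a) (x := -1)
    ⟨1, fun n hn => ?_⟩
  · have he : ((-1 : ℝ) : EReal) + 1 = 0 := by norm_cast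
    rwa [he] at h
  · simp only [a, if_neg hn]
    rw [norm_div, Complex.norm_natCast, one_mul, Real.rpow_neg_one]
    rw [div_eq_mul_inv]
    refine mul_le_of_le_one_left (by positivity) ?_
    rw [norm_prod]
    exact Finset.prod_le_one (fun p _ => norm_nonneg _) (fun p _ => norm_inv_add_one_le p)

lemma LSeries_a_eq {s : ℂ} (hs : 0 < s.re) :
    LSeries a s = riemannZeta (s + 1) *
      Complex.exp (∑' p : Nat.Primes,
        Complex.log (1 - 1 / (((p : ℕ) : ℂ) ^ s * ((p : ℕ) + 1)))) := by
  have hz : 1 < (s + 1).re := by simp only [Complex.add_re, Complex.one_re]; linarith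
  have hu : ∀ p : ℕ, p.Prime → ‖((p : ℂ) + 1)⁻¹‖ ≤ 1 := fun p _ => norm_inv_add_one_le p
  have h3 := hasProd_aux (fun p => ((p : ℂ) + 1)⁻¹) hu hz
  have htsum : (∑' n : ℕ, if n = 0 then 0 else
      (n : ℂ) ^ (-(s + 1)) * ∏ p ∈ n.primeFactors, ((p : ℂ) + 1)⁻¹) = LSeries a s := by
    refine tsum_congr fun n => ?_
    rcases eq_or_ne n 0 with rfl | hn
    · simp [LSeries.term_zero]
    · rw [LSeries.term_of_ne_zero hn]
      simp only [a, if_neg hn]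
      have hn0 : (n : ℂ) ≠ 0 := Nat.cast_ne_zero.mpr hn
      have hns : (n : ℂ) ^ s ≠ 0 := by
        intro h
        exact hn0 ((Complex.cpow_eq_zero_iff _ _).mp h).1
      rw [Complex.cpow_neg, Complex.cpow_add _ _ hn0, Complex.cpow_one]
      field_simp
  rw [htsum] at h3
  have hfac : ∀ p : Nat.Primes,
      (1 - ((1 : ℂ) - (((p : ℕ) : ℂ) + 1)⁻¹) * ((p : ℕ) : ℂ) ^ (-(s + 1))) =
      1 - 1 / (((p : ℕ) : ℂ) ^ s * ((p : ℕ) + 1)) := by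
    intro p
    have hP0 : ((p : ℕ) : ℂ) ≠ 0 := Nat.cast_ne_zero.mpr p.prop.pos.ne'
    have hP1 : (((p : ℕ) : ℂ) + 1) ≠ 0 := natCast_add_one_ne_zero _
    have hPs : ((p : ℕ) : ℂ) ^ s ≠ 0 := fun h => hP0 ((Complex.cpow_eq_zero_iff _ _).mp h).1
    rw [Complex.cpow_neg, Complex.cpow_add _ _ hP0, Complex.cpow_one]
    field_simp
    ring
  have h3' : HasProd (fun p : Nat.Primes =>
      (1 - ((p : ℕ) : ℂ) ^ (-(s + 1)))⁻¹ * (1 - 1 / (((p : ℕ) : ℂ) ^ s * ((p : ℕ) + 1))))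
      (LSeries a s) := h3.congr_fun fun p => by rw [← hfac p]
  exact h3'.unique ((riemannZeta_eulerProduct_hasProd hz).mul (ZSR.hasProd_g hs))

end ZSR3

/-- The Dirichlet series `Z(s) = Σ_{n≥1} n^{-s} ∏_{p∣n} (1+1/p)⁻¹`
satisfies `Z(s) = ζ(s) ∏_p (1 - 1/(p^s(p+1)))` for `Re(s) > 1`, where the product
converges absolutely for `Re(s) > 0`; in particular `Z(s) ζ(s+1)/ζ(s)` extends to
an analytic nonvanishing function on `Re(s) > 0`. -/
theorem Z_series_rational :
    (∀ s : ℂ, 1 < s.re →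
      ∑' n : ℕ, (if n = 0 then 0 else
          (n : ℂ) ^ (-s) * ∏ p ∈ n.primeFactors, (1 + 1 / (p : ℂ))⁻¹) =
        riemannZeta s * ∏' p : Nat.Primes, (1 - 1 / (((p : ℕ) : ℂ) ^ s * ((p : ℕ) + 1)))) ∧
    (∀ s : ℂ, 0 < s.re →
      Summable fun p : Nat.Primes => ‖(1 : ℂ) / (((p : ℕ) : ℂ) ^ s * ((p : ℕ) + 1))‖) ∧
    (∃ F : ℂ → ℂ, AnalyticOn ℂ F {s : ℂ | 0 < s.re} ∧
      (∀ s ∈ {s : ℂ | 0 < s.re}, F s ≠ 0) ∧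
      ∀ s : ℂ, 1 < s.re →
        F s = (∑' n : ℕ, (if n = 0 then 0 else
            (n : ℂ) ^ (-s) * ∏ p ∈ n.primeFactors, (1 + 1 / (p : ℂ))⁻¹)) *
          riemannZeta (s + 1) / riemannZeta s) := by
  have part1 : ∀ s : ℂ, 1 < s.re →
      ∑' n : ℕ, (if n = 0 then 0 else
          (n : ℂ) ^ (-s) * ∏ p ∈ n.primeFactors, (1 + 1 / (p : ℂ))⁻¹) =
        riemannZeta s * ∏' p : Nat.Primes, (1 - 1 / (((p : ℕ) : ℂ) ^ s * ((p : ℕ) + 1))) := by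
    intro s hs
    have hs0 : 0 < s.re := by linarith
    have hu : ∀ p : ℕ, p.Prime → ‖(1 + 1 / (p : ℂ))⁻¹‖ ≤ 1 := by
      intro p hp
      rw [show (1 : ℂ) + 1 / (p : ℂ) = Complex.ofReal (1 + 1 / (p : ℝ)) by push_cast; ring,
        ← Complex.ofReal_inv, Complex.norm_real, Real.norm_of_nonneg (by positivity)]
      refine inv_le_one_of_one_le₀ ?_
      have : (0 : ℝ) ≤ 1 / (p : ℝ) := by positivity
      linarith
    have h1 := ZSR2.hasProd_aux (fun p => (1 + 1 / (p : ℂ))⁻¹) hu hs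
    have hfac : ∀ p : Nat.Primes,
        (1 - 1 / (((p : ℕ) : ℂ) ^ s * ((p : ℕ) + 1))) =
        (1 - ((1 : ℂ) - (1 + 1 / ((p : ℕ) : ℂ))⁻¹) * ((p : ℕ) : ℂ) ^ (-s)) := by
      intro p
      have hP0 : ((p : ℕ) : ℂ) ≠ 0 := Nat.cast_ne_zero.mpr p.prop.pos.ne'
      have hP1 : (((p : ℕ) : ℂ) + 1) ≠ 0 := ZSR3.natCast_add_one_ne_zero _
      have hPs : ((p : ℕ) : ℂ) ^ s ≠ 0 := fun h => hP0 ((Complex.cpow_eq_zero_iff _ _).mp h).1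
      have hq : (1 : ℂ) + 1 / ((p : ℕ) : ℂ) ≠ 0 := by
        rw [show (1 : ℂ) + 1 / ((p : ℕ) : ℂ) = (((p : ℕ) : ℂ) + 1) / ((p : ℕ) : ℂ) by
          field_simp]
        exact div_ne_zero hP1 hP0
      rw [Complex.cpow_neg]
      field_simp
      ring
    have h1' : HasProd (fun p : Nat.Primes =>
        (1 - ((p : ℕ) : ℂ) ^ (-s))⁻¹ * (1 - 1 / (((p : ℕ) : ℂ) ^ s * ((p : ℕ) + 1))))
        (∑' n : ℕ, if n = 0 then 0 else
          (n : ℂ) ^ (-s) * ∏ p ∈ n.primeFactors, (1 + 1 / (p : ℂ))⁻¹) :=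
      h1.congr_fun fun p => by rw [hfac p]
    rw [(ZSR.hasProd_g hs0).tprod_eq]
    exact h1'.unique ((riemannZeta_eulerProduct_hasProd hs).mul (ZSR.hasProd_g hs0))
  refine ⟨part1, fun s hs => ZSR.summable_g hs, LSeries ZSR3.a,
    (LSeries_analyticOn _).mono ?_, ?_, ?_⟩
  · intro s hs
    simp only [Set.mem_setOf_eq] at hs ⊢
    exact lt_of_le_of_lt ZSR3.abscissa_le (by exact_mod_cast hs)
  · intro s hs
    simp only [Set.mem_setOf_eq] at hs
    rw [ZSR3.LSeries_a_eq hs]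
    exact mul_ne_zero (riemannZeta_ne_zero_of_one_lt_re
      (by simp only [Complex.add_re, Complex.one_re]; linarith)) (Complex.exp_ne_zero _)
  · intro s hs
    have hs0 : 0 < s.re := by linarith
    rw [ZSR3.LSeries_a_eq hs0, part1 s hs, (ZSR.hasProd_g hs0).tprod_eq]
    have hζ : riemannZeta s ≠ 0 := riemannZeta_ne_zero_of_one_lt_re hs
    field_simp
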